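/- For zonoids K in V and L in W with m = dim V ≤ dim W, one has ‖K ⊗ L‖ ≤ 2√m · ‖K‖ · ‖L‖, where ‖K‖ = max_{x∈K}‖x‖. -/

import Mathlib

/-!
Write a unit vector `u` of `ℝᵐ ⊗ ℝⁿ` through its rows `rᵢ ∈ ℝⁿ`, so that
`⟪u, x ⊗ y⟫ = ∑ᵢ xᵢ ⟪rᵢ, y⟫`. Taking absolute values and expectations, independence splits
each term as `E|Xᵢ| · E|⟪rᵢ, Y⟫| ≤ (2‖K‖) (2‖rᵢ‖ ‖L‖)`, and Cauchy–Schwarz bounds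
`∑ᵢ ‖rᵢ‖` by `√m ‖u‖ = √m`.
-/

open MeasureTheory ProbabilityTheory

noncomputable def suppFn {Ω : Type*} [MeasurableSpace Ω] (μ : Measure Ω)
    {V : Type*} [NormedAddCommGroup V] [InnerProductSpace ℝ V]
    (X : Ω → V) (v : V) : ℝ :=
  (1 / 2) * ∫ ω, |(inner ℝ v (X ω) : ℝ)| ∂μ

noncomputable def tensorE {m n : ℕ} (x : EuclideanSpace ℝ (Fin m)) (y : EuclideanSpace ℝ (Fin n)) :
    EuclideanSpace ℝ (Fin m × Fin n) :=
  (WithLp.equiv 2 (Fin m × Fin n → ℝ)).symm fun p => x p.1 * y p.2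

/-- The radius (norm) `‖K‖ = max_{x ∈ K} ‖x‖ = sup_{‖u‖=1} h_K(u)` of a zonoid `K = K(X)`. -/
noncomputable def zonoidRadius {Ω : Type*} [MeasurableSpace Ω] (μ : Measure Ω)
    {V : Type*} [NormedAddCommGroup V] [InnerProductSpace ℝ V]
    (X : Ω → V) : ℝ :=
  sSup (suppFn μ X '' Metric.sphere (0 : V) 1)

section Support

variable {Ω : Type*} [MeasurableSpace Ω] {μ : Measure Ω}
  {V : Type*} [NormedAddCommGroup V] [InnerProductSpace ℝ V] {X : Ω → V}

lemma suppFn_nonneg (v : V) : 0 ≤ suppFn μ X v :=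
  mul_nonneg (by norm_num) (integral_nonneg fun _ => abs_nonneg _)

lemma suppFn_smul (c : ℝ) (v : V) : suppFn μ X (c • v) = |c| * suppFn μ X v := by
  simp only [suppFn, real_inner_smul_left, abs_mul, integral_const_mul]
  ring

lemma zonoidRadius_nonneg : 0 ≤ zonoidRadius μ X :=
  Real.sSup_nonneg (by rintro _ ⟨v, -, rfl⟩; exact suppFn_nonneg v)

lemma integrable_abs_inner (hX : Integrable X μ) (v : V) :
    Integrable (fun ω => |inner ℝ v (X ω)|) μ :=
  (hX.const_inner v).abs

lemma bddAbove_suppFn_sphere (hX : Integrable X μ) :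
    BddAbove (suppFn μ X '' Metric.sphere (0 : V) 1) := by
  refine ⟨(1 / 2) * ∫ ω, ‖X ω‖ ∂μ, ?_⟩
  rintro _ ⟨v, hv, rfl⟩
  refine mul_le_mul_of_nonneg_left (integral_mono (integrable_abs_inner hX v) hX.norm fun ω => ?_)
    (by norm_num)
  simpa [mem_sphere_zero_iff_norm.mp hv] using abs_real_inner_le_norm v (X ω)

lemma suppFn_le_norm_mul_zonoidRadius (hX : Integrable X μ) (v : V) :
    suppFn μ X v ≤ ‖v‖ * zonoidRadius μ X := by
  rcases eq_or_ne v 0 with rfl | hv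
  · simp [suppFn]
  have hv' : ‖v‖ ≠ 0 := norm_ne_zero_iff.mpr hv
  have hunit : ‖v‖⁻¹ • v ∈ Metric.sphere (0 : V) 1 := by
    simp [norm_smul, hv']
  calc suppFn μ X v = ‖v‖ * suppFn μ X (‖v‖⁻¹ • v) := by
        rw [suppFn_smul, abs_inv, abs_norm, mul_inv_cancel_left₀ hv']
    _ ≤ ‖v‖ * zonoidRadius μ X :=
        mul_le_mul_of_nonneg_left (le_csSup (bddAbove_suppFn_sphere hX) ⟨_, hunit, rfl⟩)
          (norm_nonneg v)

end Support

namespace ProbabilityTheory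

variable {Ω : Type*} [MeasurableSpace Ω] {μ : Measure Ω}
  {V W : Type*} [NormedAddCommGroup V] [InnerProductSpace ℝ V] [MeasurableSpace V] [BorelSpace V]
  [NormedAddCommGroup W] [InnerProductSpace ℝ W] [MeasurableSpace W] [BorelSpace W]
  {X : Ω → V} {Y : Ω → W}

lemma IndepFun.abs_inner (hXY : IndepFun X Y μ) (v : V) (w : W) :
    IndepFun (fun ω => |inner ℝ v (X ω)|) (fun ω => |inner ℝ w (Y ω)|) μ :=
  hXY.comp (innerSL ℝ v).continuous.measurable.abs (innerSL ℝ w).continuous.measurable.abs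

lemma IndepFun.integral_abs_inner_mul (hXY : IndepFun X Y μ) (hX : Integrable X μ)
    (hY : Integrable Y μ) (v : V) (w : W) :
    ∫ ω, |inner ℝ v (X ω)| * |inner ℝ w (Y ω)| ∂μ = 4 * suppFn μ X v * suppFn μ Y w := by
  rw [(hXY.abs_inner v w).integral_fun_mul_eq_mul_integral
    (integrable_abs_inner hX v).1 (integrable_abs_inner hY w).1]
  simp only [suppFn]
  ring

end ProbabilityTheory

section Tensor

variable {m n : ℕ}

def tensorRow (u : EuclideanSpace ℝ (Fin m × Fin n)) (i : Fin m) : EuclideanSpace ℝ (Fin n) :=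
  WithLp.toLp 2 fun j => u (i, j)

lemma inner_tensorE (u : EuclideanSpace ℝ (Fin m × Fin n)) (x : EuclideanSpace ℝ (Fin m))
    (y : EuclideanSpace ℝ (Fin n)) :
    inner ℝ u (tensorE x y) =
      ∑ i, inner ℝ (EuclideanSpace.single i (1 : ℝ)) x * inner ℝ (tensorRow u i) y := by
  simp only [EuclideanSpace.inner_single_left, map_one, one_mul]
  simp only [PiLp.inner_apply, RCLike.inner_apply, conj_trivial, tensorE, tensorRow,
    WithLp.equiv_symm_apply, Finset.mul_sum, Fintype.sum_prod_type]
  refine Finset.sum_congr rfl fun i _ => Finset.sum_congr rfl fun j _ => by ring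

lemma sum_norm_tensorRow_sq (u : EuclideanSpace ℝ (Fin m × Fin n)) :
    ∑ i, ‖tensorRow u i‖ ^ 2 = ‖u‖ ^ 2 := by
  simp only [EuclideanSpace.norm_sq_eq, Fintype.sum_prod_type, tensorRow]

lemma sum_norm_tensorRow_le (u : EuclideanSpace ℝ (Fin m × Fin n)) :
    ∑ i, ‖tensorRow u i‖ ≤ Real.sqrt m * ‖u‖ := by
  rw [← Real.sqrt_sq (norm_nonneg u), ← Real.sqrt_mul (Nat.cast_nonneg m)]
  refine Real.le_sqrt_of_sq_le ?_
  simpa [sum_norm_tensorRow_sq] using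
    sq_sum_le_card_mul_sum_sq (s := Finset.univ) (f := fun i => ‖tensorRow u i‖)

end Tensor

section TensorZonoid

variable {Ω : Type*} [MeasurableSpace Ω] {μ : Measure Ω} {m n : ℕ}
  {X : Ω → EuclideanSpace ℝ (Fin m)} {Y : Ω → EuclideanSpace ℝ (Fin n)}

lemma suppFn_tensorE_le (hXY : IndepFun X Y μ) (hX : Integrable X μ) (hY : Integrable Y μ)
    (u : EuclideanSpace ℝ (Fin m × Fin n)) :
    suppFn μ (fun ω => tensorE (X ω) (Y ω)) u ≤
      2 * ∑ i, suppFn μ X (EuclideanSpace.single i 1) * suppFn μ Y (tensorRow u i) := by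
  have hint : ∀ i, Integrable (fun ω => |inner ℝ (EuclideanSpace.single i (1 : ℝ)) (X ω)| *
      |inner ℝ (tensorRow u i) (Y ω)|) μ := fun i =>
    (hXY.abs_inner _ _).integrable_mul (integrable_abs_inner hX _) (integrable_abs_inner hY _)
  calc suppFn μ (fun ω => tensorE (X ω) (Y ω)) u
      ≤ (1 / 2) * ∫ ω, ∑ i, |inner ℝ (EuclideanSpace.single i (1 : ℝ)) (X ω)| *
          |inner ℝ (tensorRow u i) (Y ω)| ∂μ := by
        refine mul_le_mul_of_nonneg_left (integral_mono_of_nonneg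
          (.of_forall fun _ => abs_nonneg _) (integrable_finsetSum _ fun i _ => hint i)
          (.of_forall fun ω => ?_)) (by norm_num)
        simp only [inner_tensorE]
        simpa only [abs_mul] using Finset.abs_sum_le_sum_abs (fun i => inner ℝ
          (EuclideanSpace.single i (1 : ℝ)) (X ω) * inner ℝ (tensorRow u i) (Y ω)) Finset.univ
    _ = 2 * ∑ i, suppFn μ X (EuclideanSpace.single i 1) * suppFn μ Y (tensorRow u i) := by
        simp only [integral_finsetSum _ fun i _ => hint i, hXY.integral_abs_inner_mul hX hY,
          Finset.mul_sum]
        exact Finset.sum_congr rfl fun i _ => by ring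

lemma suppFn_tensorE_le_norm (hXY : IndepFun X Y μ) (hX : Integrable X μ) (hY : Integrable Y μ)
    (u : EuclideanSpace ℝ (Fin m × Fin n)) :
    suppFn μ (fun ω => tensorE (X ω) (Y ω)) u ≤
      2 * Real.sqrt m * ‖u‖ * zonoidRadius μ X * zonoidRadius μ Y := by
  have hRX := zonoidRadius_nonneg (μ := μ) (X := X)
  have hRY := zonoidRadius_nonneg (μ := μ) (X := Y)
  calc suppFn μ (fun ω => tensorE (X ω) (Y ω)) u
      ≤ 2 * ∑ i, suppFn μ X (EuclideanSpace.single i 1) * suppFn μ Y (tensorRow u i) :=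
        suppFn_tensorE_le hXY hX hY u
    _ ≤ 2 * ∑ i, zonoidRadius μ X * (‖tensorRow u i‖ * zonoidRadius μ Y) := by
        gcongr with i
        · exact suppFn_nonneg _
        · simpa using suppFn_le_norm_mul_zonoidRadius hX (EuclideanSpace.single i (1 : ℝ))
        · exact suppFn_le_norm_mul_zonoidRadius hY _
    _ = 2 * zonoidRadius μ X * zonoidRadius μ Y * ∑ i, ‖tensorRow u i‖ := by
        simp only [Finset.mul_sum]
        exact Finset.sum_congr rfl fun i _ => by ring
    _ ≤ 2 * zonoidRadius μ X * zonoidRadius μ Y * (Real.sqrt m * ‖u‖) := by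
        gcongr
        exact sum_norm_tensorRow_le u
    _ = 2 * Real.sqrt m * ‖u‖ * zonoidRadius μ X * zonoidRadius μ Y := by ring

end TensorZonoid

theorem stmt10 {Ω : Type*} [MeasurableSpace Ω] (μ : Measure Ω)
    {m n : ℕ}
    (X : Ω → EuclideanSpace ℝ (Fin m)) (Y : Ω → EuclideanSpace ℝ (Fin n))
    (hX : Integrable X μ) (hY : Integrable Y μ)
    (hindep : IndepFun X Y μ) :
    zonoidRadius μ (fun ω => tensorE (X ω) (Y ω))
      ≤ 2 * Real.sqrt m * zonoidRadius μ X * zonoidRadius μ Y := by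
  have hRX := zonoidRadius_nonneg (μ := μ) (X := X)
  have hRY := zonoidRadius_nonneg (μ := μ) (X := Y)
  refine Real.sSup_le ?_ (by positivity)
  rintro _ ⟨u, hu, rfl⟩
  simpa [mem_sphere_zero_iff_norm.mp hu] using suppFn_tensorE_le_norm hindep hX hY u
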